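/- arXiv:2303.00402 — 6 statements merged into one kernel-verified Lean document; each statement's English description precedes it below -/
import Mathlib

section
/- Let V and H be real Hilbert spaces and ι : V → H a compact linear operator. Let B : V × V → ℝ be a bounded symmetric bilinear form for which there exist constants α > 0 and λ ∈ ℝ such that the Gårding inequality B(v,v) ≥ α‖v‖²_V − λ‖ιv‖²_H holds for all v ∈ V, and suppose moreover that B(w,w) > 0 for every w ∈ V with w ≠ 0. Then B is inf-sup stable: there exists a constant α₁ > 0 such that inf over w ∈ V \ {0} of sup over v ∈ V \ {0} of |B(v,w)| / (‖v‖_V ‖w‖_V) is at least α₁. -/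
open Filter Topology InnerProductSpace RealInnerProductSpace

/-! Represent `B(·, w)` by the Riesz vector `A w`. Gårding gives the Peetre estimate
`‖w‖ ≤ C (‖A w‖ + ‖ι w‖)`, and positivity of `B` on the diagonal makes `A` injective. Since `ι` is
compact, unit vectors `u n` with `A (u n) → 0` would have a subsequence that is Cauchy by the
estimate, converging to a unit vector in the kernel of `A`; hence `‖A w‖ ≥ c ‖w‖`. Testing with
`v = A w` then gives `B (A w) w = ‖A w‖² ≥ c ‖A w‖ ‖w‖`. -/

section PeetreEstimate

variable {𝕜 E F G : Type*} [RCLike 𝕜]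
  [NormedAddCommGroup E] [NormedSpace 𝕜 E]
  [NormedAddCommGroup F] [NormedSpace 𝕜 F]
  [NormedAddCommGroup G] [NormedSpace 𝕜 G]

theorem IsCompactOperator.exists_tendsto_subseq {K : E →L[𝕜] G} (hK : IsCompactOperator K)
    {u : ℕ → E} {R : ℝ} (hu : ∀ n, ‖u n‖ ≤ R) :
    ∃ (y : G) (φ : ℕ → ℕ), StrictMono φ ∧ Tendsto (K ∘ u ∘ φ) atTop (𝓝 y) := by
  obtain ⟨M, hM, hKM⟩ := hK.image_closedBall_subset_compact (f := (K : E →ₗ[𝕜] G)) R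
  obtain ⟨y, -, φ, hφ, hy⟩ := hM.tendsto_subseq fun n => hKM ⟨u n, by simpa using hu n, rfl⟩
  exact ⟨y, φ, hφ, hy⟩

theorem ContinuousLinearMap.exists_norm_eq_one_tendsto_zero_of_not_bounded_below
    (A : E →L[𝕜] F) (h : ¬∃ c > 0, ∀ v, c * ‖v‖ ≤ ‖A v‖) :
    ∃ u : ℕ → E, (∀ n, ‖u n‖ = 1) ∧ Tendsto (A ∘ u) atTop (𝓝 0) := by
  push Not at h
  choose v hv using fun n : ℕ => h (1 / ((n : ℝ) + 1)) (by positivity)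
  have hv0 : ∀ n, v n ≠ 0 := fun n hn => by simpa [hn] using hv n
  refine ⟨fun n => (‖v n‖⁻¹ : 𝕜) • v n, fun n => norm_smul_inv_norm (hv0 n), ?_⟩
  refine tendsto_zero_iff_norm_tendsto_zero.2 <| squeeze_zero (fun _ => norm_nonneg _)
    (fun n => ?_) tendsto_one_div_add_atTop_nhds_zero_nat
  have hvn : 0 < ‖v n‖ := norm_pos_iff.2 (hv0 n)
  calc ‖A ((‖v n‖⁻¹ : 𝕜) • v n)‖ = ‖A (v n)‖ / ‖v n‖ := by
        rw [map_smul, norm_smul, norm_inv, RCLike.norm_ofReal, abs_norm, inv_mul_eq_div]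
    _ ≤ 1 / ((n : ℝ) + 1) := by rw [div_le_iff₀ hvn]; exact (hv n).le

theorem ContinuousLinearMap.antilipschitz_prod_of_norm_le (A : E →L[𝕜] F) (K : E →L[𝕜] G)
    {C : ℝ} (hC : ∀ v, ‖v‖ ≤ C * (‖A v‖ + ‖K v‖)) :
    AntilipschitzWith (2 * C.toNNReal) (A.prod K) := by
  refine (A.prod K).antilipschitz_of_bound fun v => ?_
  have hsum : ‖A v‖ + ‖K v‖ ≤ 2 * ‖(A.prod K) v‖ := by
    rw [ContinuousLinearMap.prod_apply, Prod.norm_def]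
    linarith [le_max_left ‖A v‖ ‖K v‖, le_max_right ‖A v‖ ‖K v‖]
  calc ‖v‖ ≤ C * (‖A v‖ + ‖K v‖) := hC v
    _ ≤ max C 0 * (2 * ‖(A.prod K) v‖) :=
      mul_le_mul (le_max_left _ _) hsum (by positivity) (le_max_right _ _)
    _ = ↑(2 * C.toNNReal) * ‖(A.prod K) v‖ := by
      push_cast [Real.coe_toNNReal']; ring

theorem ContinuousLinearMap.bounded_below_of_peetre_estimate [CompleteSpace E]
    (A : E →L[𝕜] F) (hA : Function.Injective A) (K : E →L[𝕜] G) (hK : IsCompactOperator K)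
    {C : ℝ} (hC : ∀ v, ‖v‖ ≤ C * (‖A v‖ + ‖K v‖)) :
    ∃ c > 0, ∀ v, c * ‖v‖ ≤ ‖A v‖ := by
  by_contra h
  obtain ⟨u, hu1, hAu⟩ := A.exists_norm_eq_one_tendsto_zero_of_not_bounded_below h
  obtain ⟨y, φ, hφ, hKu⟩ := hK.exists_tendsto_subseq fun n => (hu1 n).le
  have hAuφ : Tendsto (A ∘ u ∘ φ) atTop (𝓝 0) := hAu.comp hφ.tendsto_atTop
  have hP : IsUniformInducing (A.prod K) :=
    (A.antilipschitz_prod_of_norm_le K hC).isUniformInducing (A.prod K).uniformContinuous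
  have hcauchy : CauchySeq (u ∘ φ) := by
    rw [CauchySeq, ← hP.cauchy_map_iff, Filter.map_map]
    exact (hAuφ.prodMk_nhds hKu).cauchySeq
  obtain ⟨x, hx⟩ := cauchySeq_tendsto_of_complete hcauchy
  have hx1 : ‖x‖ = 1 := tendsto_nhds_unique hx.norm (by simp [hu1])
  have hAx : A x = 0 := tendsto_nhds_unique ((A.continuous.tendsto x).comp hx) hAuφ
  exact one_ne_zero (hx1 ▸ norm_eq_zero.2 (hA (hAx.trans (map_zero A).symm)))

end PeetreEstimate

section Hilbert

variable {V : Type*} [NormedAddCommGroup V] [InnerProductSpace ℝ V]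

theorem LinearMap.BilinForm.exists_inner_eq [CompleteSpace V] (B : LinearMap.BilinForm ℝ V)
    {C : ℝ} (hB : ∀ v w, |B v w| ≤ C * ‖v‖ * ‖w‖) :
    ∃ A : V →L[ℝ] V, ∀ v w, ⟪A v, w⟫ = B v w :=
  ⟨continuousLinearMapOfBilin (𝕜 := ℝ) (B.mkContinuous₂ C hB),
    continuousLinearMapOfBilin_apply _⟩

theorem norm_le_of_garding {G : Type*} [NormedAddCommGroup G] [NormedSpace ℝ G]
    (A : V →L[ℝ] V) (ι : V →L[ℝ] G) {α lam : ℝ} (hα : 0 < α)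
    (h : ∀ v, α * ‖v‖ ^ 2 - lam * ‖ι v‖ ^ 2 ≤ ⟪A v, v⟫) (v : V) :
    ‖v‖ ≤ α⁻¹ * (1 + |lam| * ‖ι‖) * (‖A v‖ + ‖ι v‖) := by
  rcases eq_or_ne v 0 with rfl | hv
  · simp
  have hvpos : 0 < ‖v‖ := norm_pos_iff.2 hv
  have hlower : α * ‖v‖ * ‖v‖ ≤ (‖A v‖ + |lam| * ‖ι‖ * ‖ι v‖) * ‖v‖ := by
    have hinner : ⟪A v, v⟫ ≤ ‖A v‖ * ‖v‖ := real_inner_le_norm _ _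
    have hlam : lam * ‖ι v‖ ^ 2 ≤ |lam| * ‖ι‖ * ‖ι v‖ * ‖v‖ := by
      calc lam * ‖ι v‖ ^ 2 ≤ |lam| * ‖ι v‖ * ‖ι v‖ := by
            rw [sq, ← mul_assoc]; gcongr; exact le_abs_self lam
        _ ≤ |lam| * ‖ι v‖ * (‖ι‖ * ‖v‖) := by gcongr; exact ι.le_opNorm v
        _ = |lam| * ‖ι‖ * ‖ι v‖ * ‖v‖ := by ring
    nlinarith [h v]
  have hlower' := le_of_mul_le_mul_right hlower hvpos
  rw [mul_assoc, le_inv_mul_iff₀ hα]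
  nlinarith [norm_nonneg (A v), norm_nonneg (ι v), mul_nonneg (abs_nonneg lam) (norm_nonneg ι)]

theorem le_iSup_abs_div_of_inner_eq (B : LinearMap.BilinForm ℝ V) {C : ℝ}
    (hB : ∀ v w, |B v w| ≤ C * ‖v‖ * ‖w‖) (A : V → V) (hA : ∀ v w, ⟪A w, v⟫ = B v w) {c : ℝ}
    (hc : 0 < c) (hAc : ∀ w, c * ‖w‖ ≤ ‖A w‖) {w : V} (hw : w ≠ 0) :
    c ≤ ⨆ v : {v : V // v ≠ 0}, |B v.1 w| / (‖v.1‖ * ‖w‖) := by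
  have hwpos : 0 < ‖w‖ := norm_pos_iff.2 hw
  have hAw : A w ≠ 0 := norm_pos_iff.1 ((mul_pos hc hwpos).trans_le (hAc w))
  have hbdd : BddAbove (Set.range fun v : {v : V // v ≠ 0} => |B v.1 w| / (‖v.1‖ * ‖w‖)) := by
    refine ⟨C, Set.forall_mem_range.2 fun v => ?_⟩
    rw [div_le_iff₀ (mul_pos (norm_pos_iff.2 v.2) hwpos), ← mul_assoc]
    exact hB v.1 w
  -- test against `v = A w`, for which `B v w = ‖A w‖ ^ 2`
  refine le_ciSup_of_le hbdd ⟨A w, hAw⟩ ?_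
  rw [← hA, real_inner_self_eq_norm_sq, abs_of_nonneg (sq_nonneg _),
    le_div_iff₀ (mul_pos (norm_pos_iff.2 hAw) hwpos)]
  nlinarith [hAc w, norm_nonneg (A w)]

end Hilbert

theorem stmt0_general {V H : Type*}
    [NormedAddCommGroup V] [InnerProductSpace ℝ V] [CompleteSpace V]
    [NormedAddCommGroup H] [InnerProductSpace ℝ H]
    (ι : V →L[ℝ] H) (hι : IsCompactOperator (⇑ι))
    (B : LinearMap.BilinForm ℝ V)
    (CB : ℝ) (hBbdd : ∀ v w : V, |B v w| ≤ CB * ‖v‖ * ‖w‖)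
    (α lam : ℝ) (hα : 0 < α)
    (hGarding : ∀ v : V, α * ‖v‖ ^ 2 - lam * ‖ι v‖ ^ 2 ≤ B v v)
    (hpos : ∀ w : V, w ≠ 0 → 0 < B w w) :
    ∃ α₁ : ℝ, 0 < α₁ ∧ ∀ w : V, w ≠ 0 →
      α₁ ≤ ⨆ v : {v : V // v ≠ 0}, |B v.1 w| / (‖v.1‖ * ‖w‖) := by
  obtain ⟨A, hAB⟩ : ∃ A : V →L[ℝ] V, ∀ v w, ⟪A w, v⟫ = B v w :=
    (B.flip.exists_inner_eq (C := CB) fun v w => by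
      simpa only [LinearMap.BilinForm.flip_apply, mul_right_comm] using hBbdd w v).imp
      fun A hA v w => hA w v
  have hinj : Function.Injective A := (injective_iff_map_eq_zero A).2 fun w hw =>
    by_contra fun hne => (hpos w hne).ne' (by rw [← hAB, hw, inner_zero_left])
  obtain ⟨c, hc, hAc⟩ := A.bounded_below_of_peetre_estimate hinj ι hι
    (norm_le_of_garding A ι hα fun v => hAB v v ▸ hGarding v)
  exact ⟨c, hc, fun w hw => le_iSup_abs_div_of_inner_eq B hBbdd A hAB hc hAc hw⟩

/-- Let `V`, `H` be real Hilbert spaces, `ι : V → H` a compact linear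
operator, and `B` a bounded symmetric bilinear form on `V` satisfying a Gårding inequality
`B(v,v) ≥ α‖v‖² − λ‖ιv‖²` and strict positivity `B(w,w) > 0` for `w ≠ 0`. Then `B` is
inf-sup stable: there exists `α₁ > 0` with
`inf_{w ≠ 0} sup_{v ≠ 0} |B(v,w)| / (‖v‖‖w‖) ≥ α₁`. -/
theorem stmt0 {V H : Type*}
    [NormedAddCommGroup V] [InnerProductSpace ℝ V] [CompleteSpace V]
    [NormedAddCommGroup H] [InnerProductSpace ℝ H] [CompleteSpace H]
    (ι : V →L[ℝ] H) (hι : IsCompactOperator (⇑ι))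
    (B : LinearMap.BilinForm ℝ V)
    (CB : ℝ) (hBbdd : ∀ v w : V, |B v w| ≤ CB * ‖v‖ * ‖w‖)
    (hBsymm : ∀ v w : V, B v w = B w v)
    (α lam : ℝ) (hα : 0 < α)
    (hGarding : ∀ v : V, α * ‖v‖ ^ 2 - lam * ‖ι v‖ ^ 2 ≤ B v v)
    (hpos : ∀ w : V, w ≠ 0 → 0 < B w w) :
    ∃ α₁ : ℝ, 0 < α₁ ∧ ∀ w : V, w ≠ 0 →
      α₁ ≤ ⨆ v : {v : V // v ≠ 0}, |B v.1 w| / (‖v.1‖ * ‖w‖) :=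
  stmt0_general ι hι B CB hBbdd α lam hα hGarding hpos
end

section
/- Let X be a real Hilbert space and J : X → X* (the topological dual) a continuously Fréchet differentiable map with J(u) = 0 for some u ∈ X. Assume: (i) the bilinear form (v,w) ↦ ⟨J'(u)v, w⟩ on X × X is symmetric and there is α > 0 such that inf over v ∈ X \ {0} of sup over w ∈ X \ {0} of ⟨J'(u)v, w⟩ / (‖v‖‖w‖) ≥ α; (ii) (X_h) for h ∈ (0, h₀] is a family of finite-dimensional subspaces of X such that inf over v_h ∈ X_h of ‖u − v_h‖ tends to 0 as h → 0, and there is α̃ > 0 such that for every h, inf over v ∈ X_h \ {0} of sup over w ∈ X_h \ {0} of ⟨J'(u)v, w⟩ / (‖v‖‖w‖) ≥ α̃; (iii) there exist ε₀ > 0 and L ≥ 0 such that ‖J'(u) − J'(v)‖ ≤ L‖u − v‖ whenever ‖u − v‖ ≤ ε₀. Then for each sufficiently small δ > 0 there exists h_δ > 0 such that for all h ∈ (0, h_δ] there is a unique u_h ∈ X_h satisfying ⟨J(u_h), v_h⟩ = 0 for all v_h ∈ X_h together with ‖u − u_h‖ ≤ δ; moreover this u_h satisfies the quasi-optimal error estimate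 ‖u − u_h‖ ≤ (2‖J'(u)‖/α)(1 + ‖J'(u)‖/α̃) · inf over v_h ∈ X_h of ‖u − v_h‖. -/
/-!
On the `δ`-ball around `u`, the Galerkin residual `y ↦ (J y)|_{X_h}` is approximated by its
linearisation `B = J'(u)|_{X_h}` up to `L δ` (mean value inequality). The discrete inf-sup
condition reads `α̃ ‖y‖ ≤ ‖B y‖`, so in finite dimension `B : X_h → X_h*` is invertible, and once
`L δ ≤ α̃ / 2` the residual is injective on the ball and, by the simplified Newton iteration behind
the inverse function theorem, has a zero near every `v_h ∈ X_h` close enough to `u` (whose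
residual is `O(‖u - v_h‖)` since `J u = 0`). Testing the inf-sup bound on `u_h - v_h` and using
Galerkin orthogonality gives `‖u - u_h‖ ≤ 2 (1 + ‖J'(u)‖ / α̃) ‖u - v_h‖`; the stated constant is
larger because `α ≤ ‖J'(u)‖`.
-/

open Filter Metric Set Function NNReal Module Topology

section ApproximatesLinearOn

variable {E F : Type*} [NormedAddCommGroup E] [NormedSpace ℝ E]
  [NormedAddCommGroup F] [NormedSpace ℝ F]

theorem approximatesLinearOn_closedBall_of_lipschitz_fderiv {f : E → F}
    (hf : Differentiable ℝ f) {u : E} {ε L ρ : ℝ} {c : ℝ≥0} (hL : 0 ≤ L)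
    (hLip : ∀ v : E, ‖u - v‖ ≤ ε → ‖fderiv ℝ f u - fderiv ℝ f v‖ ≤ L * ‖u - v‖)
    (hρ : ρ ≤ ε) (hc : L * ρ ≤ c) :
    ApproximatesLinearOn f (fderiv ℝ f u) (closedBall u ρ) c := by
  intro x hx y hy
  refine (convex_closedBall u ρ).norm_image_sub_le_of_norm_fderiv_le' (fun z _ => hf z)
    (fun z hz => ?_) hy hx
  rw [mem_closedBall_iff_norm'] at hz
  calc ‖fderiv ℝ f z - fderiv ℝ f u‖ ≤ L * ‖u - z‖ := by
        rw [norm_sub_rev]; exact hLip z (hz.trans hρ)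
    _ ≤ L * ρ := by gcongr
    _ ≤ c := hc

theorem ApproximatesLinearOn.injOn_of_le_norm {f : E → F} {f' : E →L[ℝ] F} {s : Set E}
    {c : ℝ≥0} {a : ℝ} (hf : ApproximatesLinearOn f f' s c) (hf' : ∀ x, a * ‖x‖ ≤ ‖f' x‖)
    (hc : c < a) : InjOn f s := by
  intro x hx y hy hxy
  have h := hf x hx y hy
  rw [hxy, sub_self, zero_sub, norm_neg] at h
  replace h := (hf' (x - y)).trans h
  exact sub_eq_zero.1 (norm_le_zero_iff.1 (by nlinarith [norm_nonneg (x - y)]))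

noncomputable def ContinuousLinearMap.nonlinearRightInverseOfLeNorm (f' : E →L[ℝ] F)
    (hsurj : Surjective f') {a : ℝ} (ha : 0 < a) (hf' : ∀ x, a * ‖x‖ ≤ ‖f' x‖) :
    f'.NonlinearRightInverse where
  toFun := surjInv hsurj
  nnnorm := ⟨a⁻¹, inv_nonneg.2 ha.le⟩
  bound' y := by
    show _ ≤ a⁻¹ * _
    rw [inv_mul_eq_div, le_div_iff₀' ha]
    simpa only [surjInv_eq hsurj] using hf' (surjInv hsurj y)
  right_inv' := surjInv_eq hsurj

theorem ApproximatesLinearOn.exists_closedBall_eq_of_le_norm [CompleteSpace E] {f : E → F}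
    {f' : E →L[ℝ] F} {c : ℝ≥0} {a r : ℝ} {b : E}
    (hf : ApproximatesLinearOn f f' (closedBall b r) c) (hsurj : Surjective f') (ha : 0 < a)
    (hf' : ∀ x, a * ‖x‖ ≤ ‖f' x‖) (hr : 0 ≤ r) {y : F} (hy : ‖y - f b‖ ≤ (a - c) * r) :
    ∃ x ∈ closedBall b r, f x = y := by
  refine hf.surjOn_closedBall_of_nonlinearRightInverse
    (f'.nonlinearRightInverseOfLeNorm hsurj ha hf') hr Subset.rfl ?_
  rw [mem_closedBall, dist_eq_norm]
  convert hy using 3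
  exact inv_inv a

end ApproximatesLinearOn

theorem exists_forall_Ioc_lt_of_tendsto {f : ℝ → ℝ} {h₀ ε : ℝ} (hh₀ : 0 < h₀)
    (hf : Tendsto f (𝓝[Ioc 0 h₀] 0) (𝓝 0)) (hε : 0 < ε) : ∃ η > 0, ∀ h ∈ Ioc 0 η, f h < ε := by
  rw [nhdsWithin_Ioc_eq_nhdsGT hh₀] at hf
  exact mem_nhdsGT_iff_exists_Ioc_subset.1 (hf.eventually (gt_mem_nhds hε))

section StrongDual

variable {E : Type*} [NormedAddCommGroup E] [NormedSpace ℝ E]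

theorem finrank_strongDual [FiniteDimensional ℝ E] : finrank ℝ (StrongDual ℝ E) = finrank ℝ E :=
  (LinearMap.toContinuousLinearMap (𝕜 := ℝ) (E := E) (F' := ℝ)).finrank_eq.symm.trans
    Subspace.dual_finrank_eq

theorem ContinuousLinearMap.surjective_of_le_norm [FiniteDimensional ℝ E]
    (B : E →L[ℝ] StrongDual ℝ E) {a : ℝ} (ha : 0 < a) (hB : ∀ x, a * ‖x‖ ≤ ‖B x‖) :
    Surjective B := by
  refine (LinearMap.injective_iff_surjective_of_finrank_eq_finrank finrank_strongDual.symm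
    (f := (B : E →ₗ[ℝ] StrongDual ℝ E))).1 ((injective_iff_map_eq_zero B).2 fun x hx => ?_)
  have h := hB x
  rw [hx, norm_zero] at h
  exact norm_le_zero_iff.1 (by nlinarith [norm_nonneg x])

theorem StrongDual.apply_div_le (φ : StrongDual ℝ E) (x : E) {s : ℝ} (hs : 0 < s) :
    φ x / (s * ‖x‖) ≤ ‖φ‖ / s := by
  rcases eq_or_ne x 0 with rfl | hx
  · simp only [map_zero, zero_div]; positivity
  rw [div_le_div_iff₀ (by positivity) hs]
  calc φ x * s ≤ ‖φ‖ * ‖x‖ * s := by gcongr; exact (le_abs_self _).trans (φ.le_opNorm x)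
    _ = ‖φ‖ * (s * ‖x‖) := by ring

theorem ContinuousLinearMap.le_opNorm_of_infSup [Nontrivial E] (A : E →L[ℝ] StrongDual ℝ E)
    {a : ℝ} (h : ∀ v : E, v ≠ 0 → a ≤ ⨆ w : {w : E // w ≠ 0}, A v w.1 / (‖v‖ * ‖w.1‖)) :
    a ≤ ‖A‖ := by
  obtain ⟨v, hv⟩ := exists_ne (0 : E)
  have hv' : 0 < ‖v‖ := norm_pos_iff.2 hv
  calc a ≤ ⨆ w : {w : E // w ≠ 0}, A v w.1 / (‖v‖ * ‖w.1‖) := h v hv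
    _ ≤ ‖A v‖ / ‖v‖ := Real.iSup_le (fun w => (A v).apply_div_le w.1 hv') (by positivity)
    _ ≤ ‖A‖ := A.ratio_le_opNorm v

noncomputable def Submodule.strongDualRestrict (Y : Submodule ℝ E) :
    StrongDual ℝ E →L[ℝ] StrongDual ℝ Y :=
  (ContinuousLinearMap.compL ℝ Y E ℝ).flip Y.subtypeL

namespace Submodule

variable (Y : Submodule ℝ E)

@[simp]
theorem strongDualRestrict_apply (φ : StrongDual ℝ E) (y : Y) : Y.strongDualRestrict φ y = φ y :=
  rfl

theorem norm_strongDualRestrict_le (φ : StrongDual ℝ E) : ‖Y.strongDualRestrict φ‖ ≤ ‖φ‖ :=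
  ContinuousLinearMap.opNorm_le_bound _ (norm_nonneg φ) fun y => φ.le_opNorm y

theorem strongDualRestrict_eq_zero_iff {φ : StrongDual ℝ E} :
    Y.strongDualRestrict φ = 0 ↔ ∀ w ∈ Y, φ w = 0 :=
  ⟨fun h w hw => by simpa using congr($h ⟨w, hw⟩), fun h => by ext w; simpa using h w w.2⟩

theorem le_norm_strongDualRestrict_of_infSup (A : E →L[ℝ] StrongDual ℝ E) {a : ℝ}
    (h : ∀ v ∈ Y, v ≠ 0 →
      a ≤ ⨆ w : {w : E // w ∈ Y ∧ w ≠ 0}, A v w.1 / (‖v‖ * ‖w.1‖)) (y : Y) :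
    a * ‖y‖ ≤ ‖Y.strongDualRestrict (A y)‖ := by
  rcases eq_or_ne y 0 with rfl | hy
  · simp only [norm_zero, mul_zero]; positivity
  have hy' : 0 < ‖y‖ := norm_pos_iff.2 hy
  rw [← le_div_iff₀ hy']
  refine (h y y.2 (by simpa using hy)).trans (Real.iSup_le (fun w => ?_) (by positivity))
  exact (Y.strongDualRestrict (A y)).apply_div_le ⟨w.1, w.2.1⟩ hy'

end Submodule

end StrongDual

section Galerkin

variable {X : Type*} [NormedAddCommGroup X] [NormedSpace ℝ X] {J : X → StrongDual ℝ X}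
  {A : X →L[ℝ] StrongDual ℝ X} {u : X} {Y : Submodule ℝ X} {a δ : ℝ} {c : ℝ≥0}

theorem ApproximatesLinearOn.strongDualRestrict {s : Set X} (hJ : ApproximatesLinearOn J A s c)
    (Y : Submodule ℝ X) :
    ApproximatesLinearOn (fun y : Y => Y.strongDualRestrict (J y))
      (Y.strongDualRestrict ∘L A ∘L Y.subtypeL) (Subtype.val ⁻¹' s) c := by
  intro x hx y hy
  calc _ = ‖Y.strongDualRestrict (J x - J y - A (x - y))‖ := by simp only [map_sub]; rfl
    _ ≤ ‖J x - J y - A (x - y)‖ := Y.norm_strongDualRestrict_le _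
    _ ≤ c * ‖x - y‖ := hJ x hx y hy

theorem ApproximatesLinearOn.norm_sub_le_of_eq_zero
    (hJ : ApproximatesLinearOn J A (closedBall u δ) c) (hJu : J u = 0) {v : X}
    (hv : ‖u - v‖ ≤ δ) : ‖J v - A (v - u)‖ ≤ c * ‖u - v‖ := by
  have h := hJ v (mem_closedBall_iff_norm'.2 hv) u (mem_closedBall_self ((norm_nonneg _).trans hv))
  rwa [hJu, sub_zero, norm_sub_rev v u] at h

variable (hJu : J u = 0) (ha : 0 < a)
  (hB : ∀ y : Y, a * ‖y‖ ≤ ‖Y.strongDualRestrict (A y)‖)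
  (hJ : ApproximatesLinearOn J A (closedBall u δ) c) (hc : 2 * c ≤ a)
include hJu ha hB hJ hc

theorem exists_unique_galerkin_solution [FiniteDimensional ℝ Y]
    (hd : (a + 2 * ‖A‖) * infDist u Y < a * δ / 2) :
    ∃ uh ∈ Y, (∀ w ∈ Y, J uh w = 0) ∧ ‖u - uh‖ ≤ δ ∧
      ∀ uh' ∈ Y, (∀ w ∈ Y, J uh' w = 0) → ‖u - uh'‖ ≤ δ → uh' = uh := by
  set G : Y → StrongDual ℝ Y := fun y => Y.strongDualRestrict (J y)
  have hGB := hJ.strongDualRestrict Y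
  have hgal : ∀ y : Y, G y = 0 ↔ ∀ w ∈ Y, J y w = 0 := fun y => Y.strongDualRestrict_eq_zero_iff
  have hApos : 0 < a + 2 * ‖A‖ := by positivity
  have hδ : 0 < δ := by nlinarith [infDist_nonneg (x := u) (s := (Y : Set X))]
  obtain ⟨v, hv, hvu⟩ : ∃ v ∈ (Y : Set X), dist u v < a * δ / 2 / (a + 2 * ‖A‖) :=
    (infDist_lt_iff ⟨0, Y.zero_mem⟩).1 ((lt_div_iff₀' hApos).2 hd)
  rw [dist_eq_norm, lt_div_iff₀' hApos] at hvu
  have hvδ : ‖u - v‖ ≤ δ / 2 := by nlinarith [norm_nonneg (u - v), norm_nonneg A]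
  have hball : closedBall (⟨v, hv⟩ : Y) (δ / 2) ⊆ Subtype.val ⁻¹' closedBall u δ := by
    intro y hy
    rw [mem_closedBall_iff_norm'] at hy
    rw [mem_preimage, mem_closedBall_iff_norm']
    have := norm_sub_le_norm_sub_add_norm_sub u v y
    have : ‖v - y‖ ≤ δ / 2 := hy
    linarith
  have hGv : ‖0 - G ⟨v, hv⟩‖ ≤ (a - c) * (δ / 2) := by
    rw [zero_sub, norm_neg (G ⟨v, hv⟩)]
    calc ‖G ⟨v, hv⟩‖ ≤ ‖J v‖ := Y.norm_strongDualRestrict_le _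
      _ ≤ ‖J v - A (v - u)‖ + ‖A (v - u)‖ := norm_le_norm_sub_add _ _
      _ ≤ c * ‖u - v‖ + ‖A‖ * ‖u - v‖ := by
          gcongr
          · exact hJ.norm_sub_le_of_eq_zero hJu (by linarith)
          · rw [← norm_sub_rev]; exact A.le_opNorm _
      _ ≤ (a - c) * (δ / 2) := by
          nlinarith [mul_nonneg (sub_nonneg.2 hc) (norm_nonneg (u - v)), NNReal.coe_nonneg c]
  obtain ⟨uh, huh, huh0⟩ := (hGB.mono_set hball).exists_closedBall_eq_of_le_norm
    ((Y.strongDualRestrict ∘L A ∘L Y.subtypeL).surjective_of_le_norm ha hB) ha hB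
    (by linarith) hGv
  refine ⟨uh, uh.2, (hgal uh).1 huh0, mem_closedBall_iff_norm'.1 (hball huh),
    fun uh' huh' hgal' hδ' => ?_⟩
  have hinj := hGB.injOn_of_le_norm hB (by linarith [NNReal.coe_nonneg c])
  have huh'δ : (⟨uh', huh'⟩ : Y) ∈ Subtype.val ⁻¹' closedBall u δ := mem_closedBall_iff_norm'.2 hδ'
  exact congrArg Subtype.val (hinj huh'δ (hball huh) (((hgal ⟨uh', huh'⟩).2 hgal').trans huh0.symm))

theorem norm_sub_le_of_galerkin {uh : X} (huh : uh ∈ Y) (hgal : ∀ w ∈ Y, J uh w = 0)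
    (hδ : ‖u - uh‖ ≤ δ) {v : X} (hv : v ∈ Y) : ‖u - uh‖ ≤ 2 * (1 + ‖A‖ / a) * ‖u - v‖ := by
  have hsplit : Y.strongDualRestrict (A (uh - v))
      = Y.strongDualRestrict (A (uh - u) - J uh + A (u - v)) := by
    rw [map_add, map_sub Y.strongDualRestrict, (Y.strongDualRestrict_eq_zero_iff).2 hgal,
      sub_zero, ← map_add, ← map_add, sub_add_sub_cancel]
  have hdisc : a * ‖uh - v‖ ≤ c * ‖u - uh‖ + ‖A‖ * ‖u - v‖ :=
    calc a * ‖uh - v‖ ≤ ‖Y.strongDualRestrict (A (uh - v))‖ := hB ⟨uh - v, Y.sub_mem huh hv⟩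
      _ ≤ ‖A (uh - u) - J uh + A (u - v)‖ := hsplit ▸ Y.norm_strongDualRestrict_le _
      _ ≤ ‖J uh - A (uh - u)‖ + ‖A (u - v)‖ := by
          rw [← norm_neg (J uh - _), neg_sub]; exact norm_add_le _ _
      _ ≤ c * ‖u - uh‖ + ‖A‖ * ‖u - v‖ :=
          add_le_add (hJ.norm_sub_le_of_eq_zero hJu hδ) (A.le_opNorm _)
  have htri := norm_sub_le_norm_sub_add_norm_sub u v uh
  rw [norm_sub_rev v uh] at htri
  rw [show 2 * (1 + ‖A‖ / a) * ‖u - v‖ = 2 * (a + ‖A‖) * ‖u - v‖ / a by field_simp,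
    le_div_iff₀ ha]
  nlinarith [mul_nonneg (sub_nonneg.2 hc) (norm_nonneg (u - uh))]

theorem norm_sub_le_mul_infDist_of_galerkin {uh : X} (huh : uh ∈ Y) (hgal : ∀ w ∈ Y, J uh w = 0)
    (hδ : ‖u - uh‖ ≤ δ) : ‖u - uh‖ ≤ 2 * (1 + ‖A‖ / a) * infDist u Y := by
  have hK : 0 < 2 * (1 + ‖A‖ / a) := by positivity
  rw [← div_le_iff₀' hK, le_infDist ⟨0, Y.zero_mem⟩]
  intro v hv
  rw [div_le_iff₀' hK, dist_eq_norm]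
  exact norm_sub_le_of_galerkin hJu ha hB hJ hc huh hgal hδ hv

end Galerkin

theorem stmt1_general {X : Type*} [NormedAddCommGroup X] [InnerProductSpace ℝ X]
    (J : X → (X →L[ℝ] ℝ)) (hJC1 : ContDiff ℝ 1 J)
    (u : X) (hJu : J u = 0)
    (α : ℝ) (hα : 0 < α)
    (hinfsup : ∀ v : X, v ≠ 0 →
      α ≤ ⨆ w : {w : X // w ≠ 0}, fderiv ℝ J u v w.1 / (‖v‖ * ‖w.1‖))
    (h₀ : ℝ) (hh₀ : 0 < h₀)
    (Xh : ℝ → Submodule ℝ X)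
    (hfin : ∀ h ∈ Set.Ioc (0 : ℝ) h₀, FiniteDimensional ℝ (Xh h))
    (happrox : Tendsto (fun h => Metric.infDist u ((Xh h : Set X)))
      (nhdsWithin 0 (Set.Ioc 0 h₀)) (nhds 0))
    (αt : ℝ) (hαt : 0 < αt)
    (hdinfsup : ∀ h ∈ Set.Ioc (0 : ℝ) h₀, ∀ v ∈ Xh h, v ≠ 0 →
      αt ≤ ⨆ w : {w : X // w ∈ Xh h ∧ w ≠ 0}, fderiv ℝ J u v w.1 / (‖v‖ * ‖w.1‖))
    (ε₀ L : ℝ) (hε₀ : 0 < ε₀) (hL : 0 ≤ L)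
    (hLip : ∀ v : X, ‖u - v‖ ≤ ε₀ → ‖fderiv ℝ J u - fderiv ℝ J v‖ ≤ L * ‖u - v‖) :
    ∃ δ₀ > 0, ∀ δ : ℝ, 0 < δ → δ ≤ δ₀ →
      ∃ hδ : ℝ, 0 < hδ ∧ hδ ≤ h₀ ∧ ∀ h : ℝ, 0 < h → h ≤ hδ →
        ∃ uh : X, uh ∈ Xh h ∧ (∀ vh ∈ Xh h, J uh vh = 0) ∧ ‖u - uh‖ ≤ δ ∧
          (∀ uh' : X, uh' ∈ Xh h → (∀ vh ∈ Xh h, J uh' vh = 0) → ‖u - uh'‖ ≤ δ → uh' = uh) ∧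
          ‖u - uh‖ ≤ (2 * ‖fderiv ℝ J u‖ / α) * (1 + ‖fderiv ℝ J u‖ / αt) *
            Metric.infDist u ((Xh h : Set X)) := by
  set A := fderiv ℝ J u
  refine ⟨min ε₀ (αt / (2 * (L + 1))), lt_min hε₀ (by positivity), fun δ hδ hδ₀ => ?_⟩
  have hLδ : L * δ ≤ αt / 2 := by
    have h := hδ₀.trans (min_le_right _ _)
    rw [le_div_iff₀ (by positivity)] at h
    nlinarith
  set c : ℝ≥0 := ⟨αt / 2, by positivity⟩
  have hc : 2 * (c : ℝ) ≤ αt := by show 2 * (αt / 2) ≤ αt; linarith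
  have hJ : ApproximatesLinearOn J A (closedBall u δ) c :=
    approximatesLinearOn_closedBall_of_lipschitz_fderiv (hJC1.differentiable one_ne_zero) hL hLip
      (hδ₀.trans (min_le_left _ _)) hLδ
  obtain ⟨η, hη, hsmall⟩ := exists_forall_Ioc_lt_of_tendsto hh₀
    (by simpa using happrox.const_mul (αt + 2 * ‖A‖)) (by positivity : 0 < αt * δ / 2)
  refine ⟨min η h₀, lt_min hη hh₀, min_le_right _ _, fun h hpos hle => ?_⟩
  have hIoc : h ∈ Ioc 0 h₀ := ⟨hpos, hle.trans (min_le_right _ _)⟩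
  have := hfin h hIoc
  have hB := (Xh h).le_norm_strongDualRestrict_of_infSup A (hdinfsup h hIoc)
  obtain ⟨uh, huh, hgal, huδ, huniq⟩ := exists_unique_galerkin_solution hJu hαt hB hJ hc
    (hsmall h ⟨hpos, hle.trans (min_le_left _ _)⟩)
  refine ⟨uh, huh, hgal, huδ, huniq, ?_⟩
  calc ‖u - uh‖ ≤ 2 * (1 + ‖A‖ / αt) * infDist u (Xh h) :=
        norm_sub_le_mul_infDist_of_galerkin hJu hαt hB hJ hc huh hgal huδ
    _ ≤ 2 * ‖A‖ / α * (1 + ‖A‖ / αt) * infDist u (Xh h) := by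
      rcases subsingleton_or_nontrivial X with hX | hX
      · simp [infDist_zero_of_mem (Subsingleton.elim 0 u ▸ (Xh h).zero_mem)]
      · gcongr ?_ * _ * _
        · exact infDist_nonneg
        · rw [le_div_iff₀ hα]; linarith [A.le_opNorm_of_infSup hinfsup]

/-- **abstract Caloz–Rappaz theorem.** Let `X` be a real Hilbert space and
`J : X → X*` a `C¹` map with `J(u) = 0`. Assume symmetry and an inf-sup condition for
`J'(u)` on `X`, a family `(X_h)` of finite-dimensional subspaces approximating `u` on which
`J'(u)` satisfies a discrete inf-sup condition, and local Lipschitz continuity of `J'` at `u`.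
Then for each sufficiently small `δ > 0` there is `h_δ > 0` such that for all `h ∈ (0, h_δ]`
there is a unique `u_h ∈ X_h` with `⟨J(u_h), v_h⟩ = 0` for all `v_h ∈ X_h` and
`‖u − u_h‖ ≤ δ`, and this `u_h` is a quasi-best approximation of `u`. -/
theorem stmt1 {X : Type*} [NormedAddCommGroup X] [InnerProductSpace ℝ X] [CompleteSpace X]
    (J : X → (X →L[ℝ] ℝ)) (hJC1 : ContDiff ℝ 1 J)
    (u : X) (hJu : J u = 0)
    (hsymm : ∀ v w : X, fderiv ℝ J u v w = fderiv ℝ J u w v)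
    (α : ℝ) (hα : 0 < α)
    (hinfsup : ∀ v : X, v ≠ 0 →
      α ≤ ⨆ w : {w : X // w ≠ 0}, fderiv ℝ J u v w.1 / (‖v‖ * ‖w.1‖))
    (h₀ : ℝ) (hh₀ : 0 < h₀)
    (Xh : ℝ → Submodule ℝ X)
    (hfin : ∀ h ∈ Set.Ioc (0 : ℝ) h₀, FiniteDimensional ℝ (Xh h))
    (happrox : Tendsto (fun h => Metric.infDist u ((Xh h : Set X)))
      (nhdsWithin 0 (Set.Ioc 0 h₀)) (nhds 0))
    (αt : ℝ) (hαt : 0 < αt)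
    (hdinfsup : ∀ h ∈ Set.Ioc (0 : ℝ) h₀, ∀ v ∈ Xh h, v ≠ 0 →
      αt ≤ ⨆ w : {w : X // w ∈ Xh h ∧ w ≠ 0}, fderiv ℝ J u v w.1 / (‖v‖ * ‖w.1‖))
    (ε₀ L : ℝ) (hε₀ : 0 < ε₀) (hL : 0 ≤ L)
    (hLip : ∀ v : X, ‖u - v‖ ≤ ε₀ → ‖fderiv ℝ J u - fderiv ℝ J v‖ ≤ L * ‖u - v‖) :
    ∃ δ₀ > 0, ∀ δ : ℝ, 0 < δ → δ ≤ δ₀ →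
      ∃ hδ : ℝ, 0 < hδ ∧ hδ ≤ h₀ ∧ ∀ h : ℝ, 0 < h → h ≤ hδ →
        ∃ uh : X, uh ∈ Xh h ∧ (∀ vh ∈ Xh h, J uh vh = 0) ∧ ‖u - uh‖ ≤ δ ∧
          (∀ uh' : X, uh' ∈ Xh h → (∀ vh ∈ Xh h, J uh' vh = 0) → ‖u - uh'‖ ≤ δ → uh' = uh) ∧
          ‖u - uh‖ ≤ (2 * ‖fderiv ℝ J u‖ / α) * (1 + ‖fderiv ℝ J u‖ / αt) *
            Metric.infDist u ((Xh h : Set X)) :=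
  stmt1_general J hJC1 u hJu α hα hinfsup h₀ hh₀ Xh hfin happrox αt hαt hdinfsup ε₀ L hε₀ hL hLip
end

section
/- Let u and u_h be admissible functions with ∫_𝒟 |u|² dx = ∫_𝒟 |u_h|² dx = 1, and let λ ∈ ℝ satisfy the eigenvalue relation a_u(u, w) = λ (u, w)_{L²} both for w = u and for w = u_h. Set e := u_h − u. Then the exact identity E(u_h) − E(u) = (1/2)( a_u(e, e) − λ ∫_𝒟 |e|² dx ) + (β/4) ∫_𝒟 (|u_h|² − |u|²)² dx holds. -/
open MeasureTheory Complex

noncomputable section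

abbrev Pt (d : ℕ) := EuclideanSpace ℝ (Fin d)

/-- Admissible functions: C¹ functions with compact support contained in `𝒟`. -/
def Admissible (d : ℕ) (𝒟 : Set (Pt d)) (w : Pt d → ℂ) : Prop :=
  ContDiff ℝ 1 w ∧ HasCompactSupport w ∧ tsupport w ⊆ 𝒟

/-- The first coordinate `x₁`. -/
def xc1 (d : ℕ) (hd : 2 ≤ d) (x : Pt d) : ℝ := x ⟨0, by omega⟩

/-- The second coordinate `x₂`. -/
def xc2 (d : ℕ) (hd : 2 ≤ d) (x : Pt d) : ℝ := x ⟨1, by omega⟩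

/-- The divergence-free vector field `R(x) = (x₂, −x₁)` (resp. `(x₂, −x₁, 0)` if `d = 3`). -/
def Rvec (d : ℕ) (hd : 2 ≤ d) (x : Pt d) (j : Fin d) : ℝ :=
  if (j : ℕ) = 0 then xc2 d hd x else if (j : ℕ) = 1 then - xc1 d hd x else 0

/-- The `j`-th partial derivative of `w` at `x`. -/
def pd (d : ℕ) (w : Pt d → ℂ) (x : Pt d) (j : Fin d) : ℂ :=
  fderiv ℝ w x (EuclideanSpace.single j (1 : ℝ))

/-- The covariant gradient `∇_R w = ∇w + i (Ω/2) w R`. -/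
def covGrad (d : ℕ) (hd : 2 ≤ d) (Ω : ℝ) (w : Pt d → ℂ) (x : Pt d) (j : Fin d) : ℂ :=
  pd d w x j + Complex.I * ((Ω / 2 : ℝ) : ℂ) * w x * ((Rvec d hd x j : ℝ) : ℂ)

/-- The modified potential `V_R(x) = V(x) − (Ω²/4)(x₁² + x₂²)`. -/
def VR (d : ℕ) (hd : 2 ≤ d) (V : Pt d → ℝ) (Ω : ℝ) (x : Pt d) : ℝ :=
  V x - (Ω ^ 2 / 4) * ((xc1 d hd x) ^ 2 + (xc2 d hd x) ^ 2)

/-- The bilinear form `a_u(v,w) = Re ∫ (∇_R v ⬝ conj ∇_R w + (V_R + β|u|²) v conj w)`. -/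
def aForm (d : ℕ) (hd : 2 ≤ d) (𝒟 : Set (Pt d)) (V : Pt d → ℝ) (Ω β : ℝ)
    (u v w : Pt d → ℂ) : ℝ :=
  (∫ x in 𝒟, ((∑ j : Fin d, covGrad d hd Ω v x j * (starRingEnd ℂ) (covGrad d hd Ω w x j))
      + ((VR d hd V Ω x + β * ‖u x‖ ^ 2 : ℝ) : ℂ) * v x * (starRingEnd ℂ) (w x))).re

/-- The real `L²` inner product `(v,w)_{L²} = Re ∫ v conj w`. -/
def l2ip (d : ℕ) (𝒟 : Set (Pt d)) (v w : Pt d → ℂ) : ℝ :=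
  (∫ x in 𝒟, v x * (starRingEnd ℂ) (w x)).re

/-- The angular momentum term `𝓛₃ w = −i (x₁ ∂w/∂x₂ − x₂ ∂w/∂x₁)`. -/
def L3op (d : ℕ) (hd : 2 ≤ d) (w : Pt d → ℂ) (x : Pt d) : ℂ :=
  - Complex.I * (((xc1 d hd x : ℝ) : ℂ) * pd d w x ⟨1, by omega⟩
      - ((xc2 d hd x : ℝ) : ℂ) * pd d w x ⟨0, by omega⟩)

/-- The Gross–Pitaevskii energy functional. -/
def energy (d : ℕ) (hd : 2 ≤ d) (𝒟 : Set (Pt d)) (V : Pt d → ℝ) (Ω β : ℝ)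
    (w : Pt d → ℂ) : ℝ :=
  (1 / 2) * ∫ x in 𝒟, ((∑ j : Fin d, ‖pd d w x j‖ ^ 2) + V x * ‖w x‖ ^ 2
      - Ω * ((starRingEnd ℂ) (w x) * L3op d hd w x).re + (β / 2) * ‖w x‖ ^ 4)

/-- The squared `H¹`-norm `∫ (|∇w|² + |w|²)`. -/
def h1normSq (d : ℕ) (𝒟 : Set (Pt d)) (w : Pt d → ℂ) : ℝ :=
  ∫ x in 𝒟, ((∑ j : Fin d, ‖pd d w x j‖ ^ 2) + ‖w x‖ ^ 2)

/-- The second Fréchet derivative form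
`⟨E''(u)v, w⟩ = a_u(v,w) + 2β Re ∫ Re(u conj v) u conj w`. -/
def Epp (d : ℕ) (hd : 2 ≤ d) (𝒟 : Set (Pt d)) (V : Pt d → ℝ) (Ω β : ℝ)
    (u v w : Pt d → ℂ) : ℝ :=
  aForm d hd 𝒟 V Ω β u v w
    + 2 * β * (∫ x in 𝒟, (((u x * (starRingEnd ℂ) (v x)).re : ℝ) : ℂ)
        * u x * (starRingEnd ℂ) (w x)).re

/-!
Expanding the quadratic form, `a_u(e,e) = a_u(u_h,u_h) - 2 a_u(u,u_h) + a_u(u,u)` and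
`‖e‖² = 2 - 2 (u,u_h)`, so the two eigenvalue relations give
`a_u(e,e) - λ‖e‖² = a_u(u_h,u_h) - a_u(u,u)`. On the other hand, completing the square in the
covariant gradient gives pointwise `|∇_R w|² + V_R |w|² = |∇w|² + V |w|² - Ω Re(w̄ 𝓛₃w)`, hence
`2 E(w) = a_u(w,w) - β ∫|u|²|w|² + (β/2) ∫|w|⁴`; taking the difference for `w = u_h` and `w = u`,
the quartic terms combine to `(β/2) ∫(|u_h|² - |u|²)²`.
-/

open ComplexConjugate

lemma Continuous.integrableOn_of_eq_zero_off {X E : Type*} [TopologicalSpace X]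
    [R1Space X] [MeasurableSpace X] [OpensMeasurableSpace X] {μ : Measure X}
    [IsFiniteMeasureOnCompacts μ] [NormedAddCommGroup E] {f : X → E} {K : Set X}
    (hf : Continuous f) (hK : IsCompact K) (hfK : ∀ x ∉ K, f x = 0) (s : Set X) :
    IntegrableOn f s μ :=
  (hf.integrable_of_hasCompactSupport (HasCompactSupport.intro hK hfK)).integrableOn

lemma integral_complex_re {X : Type*} [MeasurableSpace X] {μ : Measure X} {f : X → ℂ}
    (hf : Integrable f μ) : ∫ x, (f x).re ∂μ = (∫ x, f x ∂μ).re :=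
  integral_re hf

section GrossPitaevskii

variable {d : ℕ} (hd : 2 ≤ d) (𝒟 : Set (Pt d))

def aFormIntegrand (d : ℕ) (hd : 2 ≤ d) (V : Pt d → ℝ) (Ω β : ℝ) (u v w : Pt d → ℂ)
    (x : Pt d) : ℂ :=
  (∑ j : Fin d, covGrad d hd Ω v x j * conj (covGrad d hd Ω w x j))
    + ((VR d hd V Ω x + β * ‖u x‖ ^ 2 : ℝ) : ℂ) * v x * conj (w x)

lemma sum_Rvec_mul (x : Pt d) (f : Fin d → ℂ) :
    ∑ j, (Rvec d hd x j : ℂ) * f j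
      = xc2 d hd x * f ⟨0, by omega⟩ - xc1 d hd x * f ⟨1, by omega⟩ := by
  rw [Fintype.sum_eq_add ⟨0, by omega⟩ ⟨1, by omega⟩ (by simp [Fin.ext_iff])]
  · simp [Rvec, sub_eq_add_neg]
  · rintro j ⟨hj0, hj1⟩
    simp [Rvec, Fin.ext_iff.not.mp hj0, Fin.ext_iff.not.mp hj1]

lemma covGrad_mul_conj (Ω : ℝ) (w : Pt d → ℂ) (x : Pt d) (j : Fin d) :
    covGrad d hd Ω w x j * conj (covGrad d hd Ω w x j)
      = (‖pd d w x j‖ ^ 2 : ℝ) + (Rvec d hd x j : ℂ) *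
          (Complex.I * (Ω / 2 : ℝ) * (w x * conj (pd d w x j) - conj (w x) * pd d w x j)
            + (Rvec d hd x j * ((Ω / 2) ^ 2 * ‖w x‖ ^ 2) : ℝ)) := by
  simp only [covGrad, map_add, map_mul, Complex.conj_I, Complex.conj_ofReal]
  push_cast
  rw [← Complex.mul_conj', ← Complex.mul_conj']
  linear_combination (-((Ω : ℂ) / 2) ^ 2 * (Rvec d hd x j : ℂ) ^ 2 * w x * conj (w x))
    * Complex.I_sq

lemma re_aFormIntegrand_self (V : Pt d → ℝ) (Ω β : ℝ) (u w : Pt d → ℂ) (x : Pt d) :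
    (aFormIntegrand d hd V Ω β u w w x).re
      = (∑ j, ‖pd d w x j‖ ^ 2) + V x * ‖w x‖ ^ 2
        - Ω * (conj (w x) * L3op d hd w x).re + β * ‖u x‖ ^ 2 * ‖w x‖ ^ 2 := by
  simp only [aFormIntegrand, covGrad_mul_conj hd, Finset.sum_add_distrib, sum_Rvec_mul hd,
    ← Complex.ofReal_sum, mul_assoc _ (w x), Complex.mul_conj', ← Complex.ofReal_pow,
    ← Complex.ofReal_mul, Complex.add_re, Complex.sub_re, Complex.re_ofReal_mul,
    Complex.ofReal_re]
  simp [Rvec, L3op, VR, Complex.mul_re, Complex.mul_im]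
  ring

lemma continuous_pd {w : Pt d → ℂ} (hw : ContDiff ℝ 1 w) (j : Fin d) :
    Continuous (fun x => pd d w x j) :=
  (hw.continuous_fderiv one_ne_zero).clm_apply continuous_const

lemma continuous_covGrad (Ω : ℝ) {w : Pt d → ℂ} (hw : ContDiff ℝ 1 w) (j : Fin d) :
    Continuous (fun x => covGrad d hd Ω w x j) := by
  have hR : Continuous (fun x => Rvec d hd x j) := by
    unfold Rvec xc1 xc2; split_ifs <;> fun_prop
  unfold covGrad
  have := continuous_pd hw j
  have := hw.continuous
  fun_prop

lemma covGrad_eq_zero_of_notMem_tsupport (Ω : ℝ) {w : Pt d → ℂ} {x : Pt d}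
    (hx : x ∉ tsupport w) (j : Fin d) : covGrad d hd Ω w x j = 0 := by
  simp [covGrad, pd, fderiv_of_notMem_tsupport _ hx, image_eq_zero_of_notMem_tsupport hx]

lemma aFormIntegrand_eq_add_potential (V : Pt d → ℝ) (Ω β : ℝ) (u v w : Pt d → ℂ)
    (x : Pt d) :
    aFormIntegrand d hd V Ω β u v w x
      = aFormIntegrand d hd 0 Ω β u v w x + V x * (v x * conj (w x)) := by
  simp only [aFormIntegrand, VR, Pi.zero_apply]
  push_cast
  ring

lemma continuous_aFormIntegrand_zero (Ω β : ℝ) {u v w : Pt d → ℂ} (hu : Continuous u)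
    (hv : ContDiff ℝ 1 v) (hw : ContDiff ℝ 1 w) :
    Continuous (aFormIntegrand d hd 0 Ω β u v w) := by
  have := continuous_covGrad hd Ω hv
  have := continuous_covGrad hd Ω hw
  have := hv.continuous
  have := hw.continuous
  unfold aFormIntegrand VR xc1 xc2
  fun_prop

lemma integrableOn_aFormIntegrand {V : Pt d → ℝ} (hV : Measurable V)
    (hV_bdd : ∃ C, ∀ x, |V x| ≤ C) (Ω β : ℝ) {u v w : Pt d → ℂ} (hu : Continuous u)
    (hv : ContDiff ℝ 1 v) (hv_cs : HasCompactSupport v) (hw : ContDiff ℝ 1 w) (s : Set (Pt d)) :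
    IntegrableOn (aFormIntegrand d hd V Ω β u v w) s := by
  have hvw : IntegrableOn (fun x => v x * conj (w x)) s :=
    (hv.continuous.mul hw.continuous.star).integrableOn_of_eq_zero_off hv_cs.isCompact
      (fun x hx => by simp [image_eq_zero_of_notMem_tsupport hx]) s
  have hV_mul : IntegrableOn (fun x => (V x : ℂ) * (v x * conj (w x))) s := by
    obtain ⟨C, hC⟩ := hV_bdd
    exact hvw.bdd_mul (c := C) (by fun_prop : Measurable fun x => (V x : ℂ)).aestronglyMeasurable
      (ae_of_all _ fun x => by simpa using hC x)
  have h0 : IntegrableOn (aFormIntegrand d hd 0 Ω β u v w) s :=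
    (continuous_aFormIntegrand_zero hd Ω β hu hv hw).integrableOn_of_eq_zero_off
      hv_cs.isCompact (fun x hx => by
        simp [aFormIntegrand, covGrad_eq_zero_of_notMem_tsupport hd Ω hx,
          image_eq_zero_of_notMem_tsupport hx]) s
  rw [funext (aFormIntegrand_eq_add_potential hd V Ω β u v w)]
  exact h0.add hV_mul

lemma pd_sub {v w : Pt d → ℂ} {x : Pt d} (hv : DifferentiableAt ℝ v x)
    (hw : DifferentiableAt ℝ w x) (j : Fin d) :
    pd d (fun y => v y - w y) x j = pd d v x j - pd d w x j := by
  simp [pd, fderiv_fun_sub hv hw]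

lemma covGrad_sub (Ω : ℝ) {v w : Pt d → ℂ} {x : Pt d} (hv : DifferentiableAt ℝ v x)
    (hw : DifferentiableAt ℝ w x) (j : Fin d) :
    covGrad d hd Ω (fun y => v y - w y) x j = covGrad d hd Ω v x j - covGrad d hd Ω w x j := by
  simp only [covGrad, pd_sub hv hw]
  ring

lemma aFormIntegrand_sub_sub (V : Pt d → ℝ) (Ω β : ℝ) (u : Pt d → ℂ) {v w : Pt d → ℂ}
    {x : Pt d} (hv : DifferentiableAt ℝ v x) (hw : DifferentiableAt ℝ w x) :
    aFormIntegrand d hd V Ω β u (fun y => v y - w y) (fun y => v y - w y) x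
      = aFormIntegrand d hd V Ω β u v v x - aFormIntegrand d hd V Ω β u w v x
        - aFormIntegrand d hd V Ω β u v w x + aFormIntegrand d hd V Ω β u w w x := by
  simp only [aFormIntegrand, covGrad_sub hd Ω hv hw, map_sub, sub_mul, mul_sub,
    Finset.sum_sub_distrib]
  ring

lemma aFormIntegrand_swap (V : Pt d → ℝ) (Ω β : ℝ) (u v w : Pt d → ℂ) (x : Pt d) :
    aFormIntegrand d hd V Ω β u w v x = conj (aFormIntegrand d hd V Ω β u v w x) := by
  simp only [aFormIntegrand, map_add, map_sum, map_mul, Complex.conj_conj, Complex.conj_ofReal]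
  congr 1
  · exact Finset.sum_congr rfl fun j _ => mul_comm _ _
  · ring

lemma aForm_eq_re_integral (V : Pt d → ℝ) (Ω β : ℝ) (u v w : Pt d → ℂ) :
    aForm d hd 𝒟 V Ω β u v w = (∫ x in 𝒟, aFormIntegrand d hd V Ω β u v w x).re :=
  rfl

lemma aForm_comm (V : Pt d → ℝ) (Ω β : ℝ) (u v w : Pt d → ℂ) :
    aForm d hd 𝒟 V Ω β u w v = aForm d hd 𝒟 V Ω β u v w := by
  simp only [aForm_eq_re_integral, aFormIntegrand_swap hd V Ω β u v w, integral_conj,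
    Complex.conj_re]

lemma aForm_sub_sub {V : Pt d → ℝ} (hV : Measurable V)
    (hV_bdd : ∃ C, ∀ x, |V x| ≤ C) (Ω β : ℝ) {u v w : Pt d → ℂ} (hu : Continuous u)
    (hv : ContDiff ℝ 1 v) (hv_cs : HasCompactSupport v)
    (hw : ContDiff ℝ 1 w) (hw_cs : HasCompactSupport w) :
    aForm d hd 𝒟 V Ω β u (fun x => v x - w x) (fun x => v x - w x)
      = aForm d hd 𝒟 V Ω β u v v - 2 * aForm d hd 𝒟 V Ω β u w v
        + aForm d hd 𝒟 V Ω β u w w := by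
  have hint := fun {v' w'} (hv' : ContDiff ℝ 1 v') (hv'_cs : HasCompactSupport v')
      (hw' : ContDiff ℝ 1 w') =>
    integrableOn_aFormIntegrand hd hV hV_bdd Ω β hu hv' hv'_cs hw' 𝒟
  have hexpand := fun x => aFormIntegrand_sub_sub hd V Ω β u
    (hv.differentiable one_ne_zero x) (hw.differentiable one_ne_zero x)
  have hcomm := aForm_comm hd 𝒟 V Ω β u v w
  rw [aForm_eq_re_integral]
  simp_rw [hexpand]
  rw [integral_add _ (hint hw hw_cs hw), integral_sub _ (hint hv hv_cs hw),
    integral_sub (hint hv hv_cs hv) (hint hw hw_cs hv)]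
  · simp only [aForm_eq_re_integral, Complex.add_re, Complex.sub_re] at hcomm ⊢
    linarith
  · exact (hint hv hv_cs hv).sub (hint hw hw_cs hv)
  · exact ((hint hv hv_cs hv).sub (hint hw hw_cs hv)).sub (hint hv hv_cs hw)

lemma l2ip_self (w : Pt d → ℂ) : l2ip d 𝒟 w w = ∫ x in 𝒟, ‖w x‖ ^ 2 := by
  simp only [l2ip, Complex.mul_conj', ← Complex.ofReal_pow, integral_complex_ofReal,
    Complex.ofReal_re]

lemma integral_norm_sub_sq {v w : Pt d → ℂ} (hv : Continuous v) (hv_cs : HasCompactSupport v)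
    (hw : Continuous w) (hw_cs : HasCompactSupport w) :
    ∫ x in 𝒟, ‖v x - w x‖ ^ 2
      = (∫ x in 𝒟, ‖v x‖ ^ 2) + (∫ x in 𝒟, ‖w x‖ ^ 2) - 2 * l2ip d 𝒟 w v := by
  have hv2 : IntegrableOn (fun x => ‖v x‖ ^ 2) 𝒟 :=
    (by fun_prop : Continuous fun x => ‖v x‖ ^ 2).integrableOn_of_eq_zero_off hv_cs.isCompact
      (fun x hx => by simp [image_eq_zero_of_notMem_tsupport hx]) 𝒟
  have hw2 : IntegrableOn (fun x => ‖w x‖ ^ 2) 𝒟 :=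
    (by fun_prop : Continuous fun x => ‖w x‖ ^ 2).integrableOn_of_eq_zero_off hw_cs.isCompact
      (fun x hx => by simp [image_eq_zero_of_notMem_tsupport hx]) 𝒟
  have hwv : IntegrableOn (fun x => w x * conj (v x)) 𝒟 :=
    (hw.mul hv.star).integrableOn_of_eq_zero_off hw_cs.isCompact
      (fun x hx => by simp [image_eq_zero_of_notMem_tsupport hx]) 𝒟
  have hpt : ∀ x, ‖v x - w x‖ ^ 2 = ‖v x‖ ^ 2 + ‖w x‖ ^ 2 - 2 * (w x * conj (v x)).re := by
    intro x
    simp only [Complex.sq_norm, Complex.normSq_sub, ← Complex.conj_re (v x * _), map_mul,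
      Complex.conj_conj, mul_comm (conj (v x))]
  simp_rw [hpt]
  have hwv_re : IntegrableOn (fun x => (w x * conj (v x)).re) 𝒟 := hwv.re
  rw [integral_sub _ (hwv_re.const_mul 2), integral_add hv2 hw2, integral_const_mul, l2ip,
    integral_complex_re hwv]
  exact hv2.add hw2

def energyDensity (d : ℕ) (hd : 2 ≤ d) (V : Pt d → ℝ) (Ω β : ℝ) (w : Pt d → ℂ) (x : Pt d) :
    ℝ :=
  (∑ j : Fin d, ‖pd d w x j‖ ^ 2) + V x * ‖w x‖ ^ 2
    - Ω * (conj (w x) * L3op d hd w x).re + (β / 2) * ‖w x‖ ^ 4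

lemma energy_eq_integral (V : Pt d → ℝ) (Ω β : ℝ) (w : Pt d → ℂ) :
    energy d hd 𝒟 V Ω β w = (1 / 2) * ∫ x in 𝒟, energyDensity d hd V Ω β w x :=
  rfl

lemma energyDensity_eq (V : Pt d → ℝ) (Ω β : ℝ) (u w : Pt d → ℂ) (x : Pt d) :
    energyDensity d hd V Ω β w x
      = (aFormIntegrand d hd V Ω β u w w x).re - β * ‖u x‖ ^ 2 * ‖w x‖ ^ 2
        + (β / 2) * ‖w x‖ ^ 4 := by
  rw [re_aFormIntegrand_self, energyDensity]
  ring

lemma integrableOn_energyDensity {V : Pt d → ℝ} (hV : Measurable V)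
    (hV_bdd : ∃ C, ∀ x, |V x| ≤ C) (Ω β : ℝ) {w : Pt d → ℂ} (hw : ContDiff ℝ 1 w)
    (hw_cs : HasCompactSupport w) :
    IntegrableOn (energyDensity d hd V Ω β w) 𝒟 := by
  have h4 : IntegrableOn (fun x => (β / 2) * ‖w x‖ ^ 4) 𝒟 :=
    (by fun_prop : Continuous fun x => (β / 2) * ‖w x‖ ^ 4).integrableOn_of_eq_zero_off
      hw_cs.isCompact (fun x hx => by simp [image_eq_zero_of_notMem_tsupport hx]) 𝒟
  have ha : IntegrableOn (fun x => (aFormIntegrand d hd V Ω β 0 w w x).re) 𝒟 :=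
    (integrableOn_aFormIntegrand hd hV hV_bdd Ω β continuous_zero hw hw_cs hw 𝒟).re
  have hsplit : energyDensity d hd V Ω β w
      = fun x => (aFormIntegrand d hd V Ω β 0 w w x).re + (β / 2) * ‖w x‖ ^ 4 :=
    funext fun x => by simp [energyDensity_eq hd V Ω β 0 w]
  rw [hsplit]
  exact ha.add h4

lemma energy_sub_energy {V : Pt d → ℝ} (hV : Measurable V)
    (hV_bdd : ∃ C, ∀ x, |V x| ≤ C) (Ω β : ℝ) {v w : Pt d → ℂ} (hv : ContDiff ℝ 1 v)
    (hv_cs : HasCompactSupport v) (hw : ContDiff ℝ 1 w) (hw_cs : HasCompactSupport w) :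
    energy d hd 𝒟 V Ω β v - energy d hd 𝒟 V Ω β w
      = (1 / 2) * (aForm d hd 𝒟 V Ω β w v v - aForm d hd 𝒟 V Ω β w w w)
        + (β / 4) * ∫ x in 𝒟, (‖v x‖ ^ 2 - ‖w x‖ ^ 2) ^ 2 := by
  have hvv := integrableOn_aFormIntegrand hd hV hV_bdd Ω β hw.continuous hv hv_cs hv 𝒟
  have hww := integrableOn_aFormIntegrand hd hV hV_bdd Ω β hw.continuous hw hw_cs hw 𝒟
  have hvv_re : IntegrableOn (fun x => (aFormIntegrand d hd V Ω β w v v x).re) 𝒟 := hvv.re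
  have hww_re : IntegrableOn (fun x => (aFormIntegrand d hd V Ω β w w w x).re) 𝒟 := hww.re
  have hsq : IntegrableOn (fun x => (‖v x‖ ^ 2 - ‖w x‖ ^ 2) ^ 2) 𝒟 :=
    (by fun_prop : Continuous fun x => (‖v x‖ ^ 2 - ‖w x‖ ^ 2) ^ 2).integrableOn_of_eq_zero_off
      (hv_cs.isCompact.union hw_cs.isCompact) (fun x hx => by
        simp [image_eq_zero_of_notMem_tsupport (not_or.1 hx).1,
          image_eq_zero_of_notMem_tsupport (not_or.1 hx).2]) 𝒟
  have hpt : ∀ x, energyDensity d hd V Ω β v x - energyDensity d hd V Ω β w x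
      = (aFormIntegrand d hd V Ω β w v v x).re - (aFormIntegrand d hd V Ω β w w w x).re
        + (β / 2) * (‖v x‖ ^ 2 - ‖w x‖ ^ 2) ^ 2 := by
    intro x
    rw [energyDensity_eq hd V Ω β w v, energyDensity_eq hd V Ω β w w]
    ring
  rw [energy_eq_integral, energy_eq_integral, ← mul_sub,
    ← integral_sub (integrableOn_energyDensity hd 𝒟 hV hV_bdd Ω β hv hv_cs)
      (integrableOn_energyDensity hd 𝒟 hV hV_bdd Ω β hw hw_cs)]
  simp_rw [hpt]
  rw [integral_add _ (hsq.const_mul _), integral_sub hvv_re hww_re, integral_const_mul,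
    integral_complex_re hvv, integral_complex_re hww, aForm_eq_re_integral,
    aForm_eq_re_integral]
  · ring
  · exact hvv_re.sub hww_re

end GrossPitaevskii

theorem stmt4_general (d : ℕ) (hd : 2 ≤ d)
    (𝒟 : Set (Pt d))
    (V : Pt d → ℝ) (hVmeas : Measurable V) (hVbdd : ∃ C : ℝ, ∀ x, V x ≤ C)
    (hVnonneg : ∀ x, 0 ≤ V x)
    (β Ω : ℝ)
    (u uh : Pt d → ℂ) (hu : Admissible d 𝒟 u) (huh : Admissible d 𝒟 uh)
    (hunorm : ∫ x in 𝒟, ‖u x‖ ^ 2 = 1) (huhnorm : ∫ x in 𝒟, ‖uh x‖ ^ 2 = 1)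
    (lam : ℝ)
    (heig_u : aForm d hd 𝒟 V Ω β u u u = lam * l2ip d 𝒟 u u)
    (heig_uh : aForm d hd 𝒟 V Ω β u u uh = lam * l2ip d 𝒟 u uh) :
    energy d hd 𝒟 V Ω β uh - energy d hd 𝒟 V Ω β u
      = (1 / 2) * (aForm d hd 𝒟 V Ω β u (fun x => uh x - u x) (fun x => uh x - u x)
            - lam * ∫ x in 𝒟, ‖uh x - u x‖ ^ 2)
        + (β / 4) * ∫ x in 𝒟, (‖uh x‖ ^ 2 - ‖u x‖ ^ 2) ^ 2 := by
  obtain ⟨hu, hu_cs, -⟩ := hu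
  obtain ⟨huh, huh_cs, -⟩ := huh
  have hV_bdd : ∃ C, ∀ x, |V x| ≤ C := by
    obtain ⟨C, hC⟩ := hVbdd
    exact ⟨C, fun x => abs_le.2 ⟨by linarith [hVnonneg x, hC x], hC x⟩⟩
  rw [l2ip_self, hunorm] at heig_u
  rw [energy_sub_energy hd 𝒟 hVmeas hV_bdd Ω β huh huh_cs hu hu_cs,
    aForm_sub_sub hd 𝒟 hVmeas hV_bdd Ω β hu.continuous huh huh_cs hu hu_cs,
    integral_norm_sub_sq 𝒟 huh.continuous huh_cs hu.continuous hu_cs, huhnorm, hunorm]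
  linear_combination heig_uh - heig_u

/-- **exact energy-difference identity, proof of Lemma 5.3.** For normalized
admissible `u, u_h` and `λ` satisfying the eigenvalue relation `a_u(u,w) = λ(u,w)_{L²}` for
`w = u` and `w = u_h`, setting `e := u_h − u` one has
`E(u_h) − E(u) = (1/2)(a_u(e,e) − λ∫|e|²) + (β/4)∫(|u_h|² − |u|²)²`. -/
theorem stmt4 (d : ℕ) (hd23 : d = 2 ∨ d = 3) (hd : 2 ≤ d)
    (𝒟 : Set (Pt d)) (h𝒟open : IsOpen 𝒟) (h𝒟bdd : Bornology.IsBounded 𝒟)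
    (V : Pt d → ℝ) (hVmeas : Measurable V) (hVbdd : ∃ C : ℝ, ∀ x, V x ≤ C)
    (hVnonneg : ∀ x, 0 ≤ V x)
    (β Ω : ℝ) (hβ : 0 ≤ β)
    (u uh : Pt d → ℂ) (hu : Admissible d 𝒟 u) (huh : Admissible d 𝒟 uh)
    (hunorm : ∫ x in 𝒟, ‖u x‖ ^ 2 = 1) (huhnorm : ∫ x in 𝒟, ‖uh x‖ ^ 2 = 1)
    (lam : ℝ)
    (heig_u : aForm d hd 𝒟 V Ω β u u u = lam * l2ip d 𝒟 u u)
    (heig_uh : aForm d hd 𝒟 V Ω β u u uh = lam * l2ip d 𝒟 u uh) :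
    energy d hd 𝒟 V Ω β uh - energy d hd 𝒟 V Ω β u
      = (1 / 2) * (aForm d hd 𝒟 V Ω β u (fun x => uh x - u x) (fun x => uh x - u x)
            - lam * ∫ x in 𝒟, ‖uh x - u x‖ ^ 2)
        + (β / 4) * ∫ x in 𝒟, (‖uh x‖ ^ 2 - ‖u x‖ ^ 2) ^ 2 :=
  stmt4_general d hd 𝒟 V hVmeas hVbdd hVnonneg β Ω u uh hu huh hunorm huhnorm lam heig_u heig_uh
end
end

section
/- Let V and H be complex Hilbert spaces and ι : V → H an injective continuous ℂ-linear map with ‖ιv‖_H ≤ ‖v‖_V for all v ∈ V. Let W ⊆ V be a closed complex subspace, let P : V → V be the orthogonal projection onto W, and let u ∈ V satisfy ‖ιu‖_H = 1 and ‖ι(u − Pu)‖_H < 1. Then ⟨ι(Pu), ιu⟩_H ≠ 0, and for every w ∈ V with ⟨ιw, ιu⟩_H = 0 the element Qw := Pw − (⟨ι(Pw), ιu⟩_H / ⟨ι(Pu), ιu⟩_H) · Pu lies in W, satisfies ⟨ι(Qw), ιu⟩_H = 0, and obeys the estimate ‖w − Qw‖_V ≤ (1 + ‖Pu‖_V / (1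 − ‖ι(u − Pu)‖_H)) · ‖w − Pw‖_V. -/
/-! Since `‖ιu‖ = 1`, the defect `1 - ⟨ι(Pu), ιu⟩` equals
`⟨ι(u - Pu), ιu⟩`, so `|⟨ι(Pu), ιu⟩| ≥ 1 - ‖ι(u - Pu)‖ > 0`. Likewise `⟨ιw, ιu⟩ = 0` gives
`|⟨ι(Pw), ιu⟩| = |⟨ι(w - Pw), ιu⟩| ≤ ‖w - Pw‖`, which bounds the size of the correction term
`(⟨ι(Pw), ιu⟩ / ⟨ι(Pu), ιu⟩) · Pu`; the triangle inequality finishes the proof. -/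

open scoped InnerProductSpace

section InnerProduct

variable {𝕜 E : Type*} [RCLike 𝕜] [SeminormedAddCommGroup E] [InnerProductSpace 𝕜 E]

theorem one_sub_norm_sub_le_norm_inner {x : E} (hx : ‖x‖ = 1) (y : E) :
    1 - ‖x - y‖ ≤ ‖⟪x, y⟫_𝕜‖ := by
  have hdefect : (1 : 𝕜) - ⟪x, y⟫_𝕜 = ⟪x, x - y⟫_𝕜 := by
    rw [inner_sub_right, inner_self_eq_norm_sq_to_K, hx]
    norm_num
  have hbound : ‖(1 : 𝕜) - ⟪x, y⟫_𝕜‖ ≤ ‖x - y‖ := by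
    simpa [hdefect, hx] using norm_inner_le_norm (𝕜 := 𝕜) x (x - y)
  have := norm_sub_norm_le (1 : 𝕜) ⟪x, y⟫_𝕜
  rw [norm_one] at this
  linarith

theorem norm_inner_le_norm_sub_of_inner_eq_zero {x a : E} (hx : ‖x‖ = 1)
    (ha : ⟪x, a⟫_𝕜 = 0) (b : E) : ‖⟪x, b⟫_𝕜‖ ≤ ‖a - b‖ := by
  have hb : ⟪x, b⟫_𝕜 = -⟪x, a - b⟫_𝕜 := by
    rw [inner_sub_right, ha, zero_sub, neg_neg]
  simpa [hb, hx] using norm_inner_le_norm (𝕜 := 𝕜) x (a - b)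

theorem inner_sub_div_smul_eq_zero {x z : E} (hz : ⟪x, z⟫_𝕜 ≠ 0) (y : E) :
    ⟪x, y - (⟪x, y⟫_𝕜 / ⟪x, z⟫_𝕜) • z⟫_𝕜 = 0 := by
  rw [inner_sub_right, inner_smul_right, div_mul_cancel₀ _ hz, sub_self]

end InnerProduct

theorem norm_sub_sub_div_smul_le {𝕜 E : Type*} [NormedField 𝕜] [SeminormedAddCommGroup E]
    [NormedSpace 𝕜 E] {w p e : E} {b c : 𝕜} {m : ℝ} (hm : 0 < m) (hc : m ≤ ‖c‖)
    (hb : ‖b‖ ≤ ‖w - p‖) : ‖w - (p - (b / c) • e)‖ ≤ (1 + ‖e‖ / m) * ‖w - p‖ := by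
  have hcoeff : ‖b / c‖ ≤ ‖w - p‖ / m := by
    rw [norm_div]
    exact div_le_div₀ (norm_nonneg _) hb hm hc
  calc ‖w - (p - (b / c) • e)‖ = ‖(w - p) + (b / c) • e‖ := by congr 1; abel
    _ ≤ ‖w - p‖ + ‖b / c‖ * ‖e‖ := (norm_add_le _ _).trans_eq (by rw [norm_smul])
    _ ≤ ‖w - p‖ + ‖w - p‖ / m * ‖e‖ := by gcongr
    _ = (1 + ‖e‖ / m) * ‖w - p‖ := by ring

theorem stmt6_general {V H : Type*}
    [NormedAddCommGroup V] [InnerProductSpace ℂ V]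
    [NormedAddCommGroup H] [InnerProductSpace ℂ H]
    (ι : V →L[ℂ] H) (hnorm : ∀ v : V, ‖ι v‖ ≤ ‖v‖)
    (W : Submodule ℂ V)
    (P : V → V) (hPmem : ∀ v, P v ∈ W)
    (u : V) (hu1 : ‖ι u‖ = 1) (hu2 : ‖ι (u - P u)‖ < 1) :
    (inner ℂ (ι u) (ι (P u)) : ℂ) ≠ 0 ∧
    ∀ w : V, (inner ℂ (ι u) (ι w) : ℂ) = 0 →
      (P w - ((inner ℂ (ι u) (ι (P w)) : ℂ) / (inner ℂ (ι u) (ι (P u)) : ℂ)) • P u) ∈ W ∧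
      (inner ℂ (ι u)
        (ι (P w - ((inner ℂ (ι u) (ι (P w)) : ℂ) / (inner ℂ (ι u) (ι (P u)) : ℂ)) • P u)) : ℂ)
        = 0 ∧
      ‖w - (P w - ((inner ℂ (ι u) (ι (P w)) : ℂ) / (inner ℂ (ι u) (ι (P u)) : ℂ)) • P u)‖
        ≤ (1 + ‖P u‖ / (1 - ‖ι (u - P u)‖)) * ‖w - P w‖ := by
  have hgap : 0 < 1 - ‖ι (u - P u)‖ := sub_pos.mpr hu2
  have hc : 1 - ‖ι (u - P u)‖ ≤ ‖⟪ι u, ι (P u)⟫_ℂ‖ := by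
    simpa only [map_sub] using one_sub_norm_sub_le_norm_inner hu1 (ι (P u))
  have hc0 : ⟪ι u, ι (P u)⟫_ℂ ≠ 0 := norm_pos_iff.mp (hgap.trans_le hc)
  refine ⟨hc0, fun w hw => ⟨W.sub_mem (hPmem w) (W.smul_mem _ (hPmem u)), ?_, ?_⟩⟩
  · rw [map_sub, map_smul]
    exact inner_sub_div_smul_eq_zero hc0 _
  · refine norm_sub_sub_div_smul_le hgap hc ?_
    calc ‖⟪ι u, ι (P w)⟫_ℂ‖ ≤ ‖ι w - ι (P w)‖ :=
          norm_inner_le_norm_sub_of_inner_eq_zero hu1 hw _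
      _ ≤ ‖w - P w‖ := map_sub ι w (P w) ▸ hnorm _

/-- Let `V`, `H` be complex Hilbert spaces, `ι : V → H` injective,
continuous, ℂ-linear with `‖ιv‖ ≤ ‖v‖`, `W ⊆ V` a closed complex subspace, `P` the
orthogonal projection onto `W`, and `u ∈ V` with `‖ιu‖ = 1` and `‖ι(u − Pu)‖ < 1`.
Then `⟨ι(Pu), ιu⟩ ≠ 0`, and for every `w` with `⟨ιw, ιu⟩ = 0` the corrected projection
`Qw := Pw − (⟨ι(Pw), ιu⟩/⟨ι(Pu), ιu⟩)·Pu` lies in `W`, satisfies `⟨ι(Qw), ιu⟩ = 0`, and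
`‖w − Qw‖ ≤ (1 + ‖Pu‖/(1 − ‖ι(u − Pu)‖))·‖w − Pw‖`.
(Recall that the paper's inner product `⟨a, b⟩`, linear in `a`, is Mathlib's `inner b a`.) -/
theorem stmt6 {V H : Type*}
    [NormedAddCommGroup V] [InnerProductSpace ℂ V] [CompleteSpace V]
    [NormedAddCommGroup H] [InnerProductSpace ℂ H] [CompleteSpace H]
    (ι : V →L[ℂ] H) (hinj : Function.Injective ι) (hnorm : ∀ v : V, ‖ι v‖ ≤ ‖v‖)
    (W : Submodule ℂ V) (hWclosed : IsClosed (W : Set V))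
    (P : V → V) (hPmem : ∀ v, P v ∈ W) (hPorth : ∀ v, v - P v ∈ Wᗮ)
    (u : V) (hu1 : ‖ι u‖ = 1) (hu2 : ‖ι (u - P u)‖ < 1) :
    (inner ℂ (ι u) (ι (P u)) : ℂ) ≠ 0 ∧
    ∀ w : V, (inner ℂ (ι u) (ι w) : ℂ) = 0 →
      (P w - ((inner ℂ (ι u) (ι (P w)) : ℂ) / (inner ℂ (ι u) (ι (P u)) : ℂ)) • P u) ∈ W ∧
      (inner ℂ (ι u)
        (ι (P w - ((inner ℂ (ι u) (ι (P w)) : ℂ) / (inner ℂ (ι u) (ι (P u)) : ℂ)) • P u)) : ℂ)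
        = 0 ∧
      ‖w - (P w - ((inner ℂ (ι u) (ι (P w)) : ℂ) / (inner ℂ (ι u) (ι (P u)) : ℂ)) • P u)‖
        ≤ (1 + ‖P u‖ / (1 - ‖ι (u - P u)‖)) * ‖w - P w‖ :=
  stmt6_general ι hnorm W P hPmem u hu1 hu2
end

section
/- Let V be a real Hilbert space, W ⊆ V a subspace, and B : V × V → ℝ a bilinear form satisfying |B(v,w)| ≤ C_B ‖v‖‖w‖ for all v, w ∈ V. Suppose there are constants α > 0, C₁ ≥ 0 and ε ≥ 0 with α − C_B ε > 0 such that for every w ∈ W there exist z ∈ V and z_h ∈ W with B(w + z, w) ≥ α‖w‖², ‖z‖ ≤ C₁‖w‖, and ‖z − z_h‖ ≤ ε‖w‖. Then the discrete inf-sup condition holds on W: for every w ∈ W, sup over v ∈ W \ {0} of B(v, w)/‖v‖ is at least ((α − C_B ε)/(1 + C₁ + ε)) ‖w‖. -/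
/-- **abstract Schatz argument.** Let `V` be a real Hilbert space, `W ⊆ V`
a subspace and `B` a bounded bilinear form, `|B(v,w)| ≤ C_B‖v‖‖w‖`. Suppose there are
`α > 0`, `C₁ ≥ 0`, `ε ≥ 0` with `α − C_B ε > 0` such that for every `w ∈ W` there exist
`z ∈ V` and `z_h ∈ W` with `B(w + z, w) ≥ α‖w‖²`, `‖z‖ ≤ C₁‖w‖` and `‖z − z_h‖ ≤ ε‖w‖`.
Then for every `w ∈ W`,
`sup_{v ∈ W \ {0}} B(v,w)/‖v‖ ≥ ((α − C_B ε)/(1 + C₁ + ε))‖w‖`. -/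
theorem stmt10 {V : Type*} [NormedAddCommGroup V] [InnerProductSpace ℝ V]
    (W : Submodule ℝ V)
    (B : LinearMap.BilinForm ℝ V)
    (CB : ℝ) (hBbdd : ∀ v w : V, |B v w| ≤ CB * ‖v‖ * ‖w‖)
    (α C₁ ε : ℝ) (hα : 0 < α) (hC₁ : 0 ≤ C₁) (hε : 0 ≤ ε)
    (hαε : 0 < α - CB * ε)
    (hyp : ∀ w ∈ W, ∃ z : V, ∃ zh ∈ W,
      α * ‖w‖ ^ 2 ≤ B (w + z) w ∧ ‖z‖ ≤ C₁ * ‖w‖ ∧ ‖z - zh‖ ≤ ε * ‖w‖) :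
    ∀ w ∈ W, ((α - CB * ε) / (1 + C₁ + ε)) * ‖w‖ ≤
      ⨆ v : {v : V // v ∈ W ∧ v ≠ 0}, B v.1 w / ‖v.1‖ := by
  intro w hw
  by_cases hw0 : w = 0
  · subst hw0
    simp only [norm_zero, mul_zero]
    rcases isEmpty_or_nonempty {v : V // v ∈ W ∧ v ≠ 0} with hE | hNE
    · rw [Real.iSup_of_isEmpty]
    · have : ∀ v : {v : V // v ∈ W ∧ v ≠ 0}, B v.1 (0 : V) / ‖v.1‖ = 0 := by
        intro v; simp
      simp only [this, ciSup_const, le_refl]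
  · obtain ⟨z, zh, hzhW, hBz, hznorm, hzzh⟩ := hyp w hw
    have hwpos : (0 : ℝ) < ‖w‖ := norm_pos_iff.mpr hw0
    have hCB : 0 ≤ CB := by
      have h1 := hBbdd w w
      have h2 : (0 : ℝ) ≤ CB * ‖w‖ * ‖w‖ := le_trans (abs_nonneg _) h1
      nlinarith [mul_pos hwpos hwpos]
    -- the candidate test function
    set v : V := w + zh with hv
    have hvW : v ∈ W := W.add_mem hw hzhW
    -- lower bound for B v w
    have hdiff : B v w = B (w + z) w + B (zh - z) w := by
      have : v = (w + z) + (zh - z) := by rw [hv]; abel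
      rw [this, map_add, LinearMap.add_apply]
    have habs : |B (zh - z) w| ≤ CB * ε * ‖w‖ ^ 2 := by
      have h1 := hBbdd (zh - z) w
      have h2 : ‖zh - z‖ ≤ ε * ‖w‖ := by rwa [norm_sub_rev] at hzzh
      have h3 : CB * ‖zh - z‖ * ‖w‖ ≤ CB * (ε * ‖w‖) * ‖w‖ := by
        apply mul_le_mul_of_nonneg_right _ (norm_nonneg w)
        exact mul_le_mul_of_nonneg_left h2 hCB
      nlinarith
    have hBlow : (α - CB * ε) * ‖w‖ ^ 2 ≤ B v w := by
      have := (abs_le.mp habs).1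
      rw [hdiff]; nlinarith
    have hBpos : 0 < B v w := by
      have : 0 < (α - CB * ε) * ‖w‖ ^ 2 := by positivity
      linarith
    have hv0 : v ≠ 0 := by
      intro h
      rw [h] at hBpos
      simp at hBpos
    -- upper bound for ‖v‖
    have hvnorm : ‖v‖ ≤ (1 + C₁ + ε) * ‖w‖ := by
      have h1 : ‖v‖ ≤ ‖w‖ + ‖z‖ + ‖zh - z‖ := by
        calc ‖v‖ = ‖w + z + (zh - z)‖ := by rw [hv]; congr 1; abel
          _ ≤ ‖w + z‖ + ‖zh - z‖ := norm_add_le _ _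
          _ ≤ ‖w‖ + ‖z‖ + ‖zh - z‖ := by linarith [norm_add_le w z]
      have h2 : ‖zh - z‖ ≤ ε * ‖w‖ := by rwa [norm_sub_rev] at hzzh
      nlinarith
    have hvpos : (0 : ℝ) < ‖v‖ := norm_pos_iff.mpr hv0
    -- the key ratio bound
    have hkey : (α - CB * ε) / (1 + C₁ + ε) * ‖w‖ ≤ B v w / ‖v‖ := by
      have hD : (0 : ℝ) < (1 + C₁ + ε) := by linarith
      have heq : (α - CB * ε) / (1 + C₁ + ε) * ‖w‖
          = ((α - CB * ε) * ‖w‖ ^ 2) / ((1 + C₁ + ε) * ‖w‖) := by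
        field_simp
      rw [heq]
      exact div_le_div₀ (le_of_lt hBpos) hBlow hvpos hvnorm
    -- boundedness of the sup
    have hbdd : BddAbove (Set.range fun v : {v : V // v ∈ W ∧ v ≠ 0} => B v.1 w / ‖v.1‖) := by
      refine ⟨CB * ‖w‖, ?_⟩
      rintro x ⟨⟨u, huW, hu0⟩, rfl⟩
      have hupos : (0 : ℝ) < ‖u‖ := norm_pos_iff.mpr hu0
      rw [div_le_iff₀ hupos]
      have := le_trans (le_abs_self _) (hBbdd u w)
      nlinarith
    exact le_trans hkey (le_ciSup hbdd ⟨v, hvW, hv0⟩)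
end

section
/- Let u be an admissible function and λ ∈ ℝ such that the eigenvalue relation a_u(u, w) = λ (u, w)_{L²} holds for every admissible function w. Then the purely imaginary phase direction iu satisfies ⟨E''(u)(iu), w⟩ = λ (iu, w)_{L²} for every admissible function w; that is, iu lies in the kernel of the linearized operator E''(u) − λ𝓘 in the weak sense. -/
open MeasureTheory Complex

noncomputable section

/-!
Multiplication by a constant `c` commutes with the covariant gradient, so moving `c` from the
second to the third argument of `a_u` or of `(·,·)_{L²}` turns it into `conj c`. With `c = i`
the eigenvalue relation, tested against the admissible `-i w`, gives `a_u(iu, w) = λ (iu, w)_{L²}`,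
and the extra term of `E''(u)` vanishes in the direction `iu` since `Re(u · conj(iu)) = 0`.
-/

theorem pd_const_mul (d : ℕ) (c : ℂ) (f : Pt d → ℂ) (x : Pt d) (j : Fin d) :
    pd d (fun y => c * f y) x j = c * pd d f x j := by
  change fderiv ℝ (c • f) x _ = _
  rw [fderiv_const_smul_field]
  rfl

theorem covGrad_const_mul (d : ℕ) (hd : 2 ≤ d) (Ω : ℝ) (c : ℂ) (f : Pt d → ℂ) (x : Pt d)
    (j : Fin d) :
    covGrad d hd Ω (fun y => c * f y) x j = c * covGrad d hd Ω f x j := by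
  simp only [covGrad, pd_const_mul]
  ring

theorem Admissible.const_mul {d : ℕ} {𝒟 : Set (Pt d)} {w : Pt d → ℂ} (hw : Admissible d 𝒟 w)
    (c : ℂ) : Admissible d 𝒟 (fun x => c * w x) :=
  ⟨contDiff_const.mul hw.1, hw.2.1.mul_left,
    (closure_mono (Function.support_mul_subset_right _ _)).trans hw.2.2⟩

theorem aForm_const_mul_left (d : ℕ) (hd : 2 ≤ d) (𝒟 : Set (Pt d)) (V : Pt d → ℝ) (Ω β : ℝ)
    (c : ℂ) (u v w : Pt d → ℂ) :
    aForm d hd 𝒟 V Ω β u (fun x => c * v x) w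
      = aForm d hd 𝒟 V Ω β u v (fun x => starRingEnd ℂ c * w x) := by
  simp only [aForm, covGrad_const_mul, map_mul, Complex.conj_conj]
  congr 2
  ext x
  congr 1
  · exact Finset.sum_congr rfl fun j _ => by ring
  · ring

theorem l2ip_const_mul_left (d : ℕ) (𝒟 : Set (Pt d)) (c : ℂ) (v w : Pt d → ℂ) :
    l2ip d 𝒟 (fun x => c * v x) w = l2ip d 𝒟 v (fun x => starRingEnd ℂ c * w x) := by
  simp only [l2ip, map_mul, Complex.conj_conj]
  congr 2
  ext x
  ring

theorem re_mul_conj_I_mul_self (z : ℂ) : (z * starRingEnd ℂ (Complex.I * z)).re = 0 := by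
  simp [Complex.mul_re, Complex.mul_im]
  ring

theorem stmt13_general (d : ℕ) (hd : 2 ≤ d)
    (𝒟 : Set (Pt d)) (V : Pt d → ℝ) (β Ω : ℝ) (u : Pt d → ℂ) (lam : ℝ)
    (heig : ∀ w : Pt d → ℂ, Admissible d 𝒟 w →
      aForm d hd 𝒟 V Ω β u u w = lam * l2ip d 𝒟 u w) :
    ∀ w : Pt d → ℂ, Admissible d 𝒟 w →
      Epp d hd 𝒟 V Ω β u (fun x => Complex.I * u x) w
        = lam * l2ip d 𝒟 (fun x => Complex.I * u x) w := by
  intro w hw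
  have hnonlinear : (∫ x in 𝒟, (((u x * (starRingEnd ℂ) (Complex.I * u x)).re : ℝ) : ℂ)
      * u x * (starRingEnd ℂ) (w x)).re = 0 := by
    simp only [re_mul_conj_I_mul_self, Complex.ofReal_zero, zero_mul, integral_zero,
      Complex.zero_re]
  rw [Epp, hnonlinear, mul_zero, add_zero, aForm_const_mul_left, l2ip_const_mul_left,
    heig _ (hw.const_mul _)]

/-- **phase direction in the kernel of the linearization.** If the admissible
function `u` with `λ ∈ ℝ` satisfies the eigenvalue relation `a_u(u,w) = λ(u,w)_{L²}` for
every admissible `w`, then `⟨E''(u)(iu), w⟩ = λ(iu, w)_{L²}` for every admissible `w`;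
that is, `iu` lies in the kernel of `E''(u) − λ𝓘` in the weak sense. -/
theorem stmt13 (d : ℕ) (hd23 : d = 2 ∨ d = 3) (hd : 2 ≤ d)
    (𝒟 : Set (Pt d)) (h𝒟open : IsOpen 𝒟) (h𝒟bdd : Bornology.IsBounded 𝒟)
    (V : Pt d → ℝ) (hVmeas : Measurable V) (hVbdd : ∃ C : ℝ, ∀ x, V x ≤ C)
    (hVnonneg : ∀ x, 0 ≤ V x)
    (β Ω : ℝ) (hβ : 0 ≤ β)
    (u : Pt d → ℂ) (hu : Admissible d 𝒟 u)
    (lam : ℝ)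
    (heig : ∀ w : Pt d → ℂ, Admissible d 𝒟 w →
      aForm d hd 𝒟 V Ω β u u w = lam * l2ip d 𝒟 u w) :
    ∀ w : Pt d → ℂ, Admissible d 𝒟 w →
      Epp d hd 𝒟 V Ω β u (fun x => Complex.I * u x) w
        = lam * l2ip d 𝒟 (fun x => Complex.I * u x) w :=
  stmt13_general d hd 𝒟 V β Ω u lam heig
end
end
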